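/- arXiv:2507.13701 — 3 statements merged into one kernel-verified Lean document; each statement's English description precedes it below -/
import Mathlib

section
/- Let n > 2, ξ a primitive n-th root of unity, R = ℤ[ξ]/(n), and Q_n ≤ GL₂(R) the subgroup generated by A = [[ξ,0],[0,1]] and B = [[1,1],[0,1]]. Then the commutator subgroup [Q_n, Q_n] is abelian; that is, Q_n is metabelian. -/
/-!
Both generators are upper triangular, so `Q_n` lies in the group of invertible upper triangular
matrices. Taking the diagonal is a homomorphism from that group to a commutative monoid, so every
commutator is unitriangular; and the unitriangular `2 × 2` matrices `!![1, a; 0, 1]` commute.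
-/

open Matrix
open scoped commutatorElement

lemma MonoidHom.map_commutatorElement_eq_one {G M : Type*} [Group G] [CommMonoid M]
    (f : G →* M) (g h : G) : f ⁅g, h⁆ = 1 := by
  rw [← f.coe_toHomUnits, map_commutatorElement,
    commutatorElement_eq_one_iff_mul_comm.mpr (mul_comm _ _), Units.val_one]

namespace Matrix

variable {n R : Type*} [LinearOrder n] [CommRing R]

lemma IsUpperTriangular.mul_apply_self [Fintype n] {M N : Matrix n n R}
    (hM : M.IsUpperTriangular) (hN : N.IsUpperTriangular) (i : n) :
    (M * N) i i = M i i * N i i := by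
  rw [mul_apply, Finset.sum_eq_single i]
  · intro k _ hki
    rcases hki.lt_or_gt with hk | hk
    · rw [hM hk, zero_mul]
    · rw [hN hk, mul_zero]
  · simp

lemma isUpperTriangular_fin_two_iff {M : Matrix (Fin 2) (Fin 2) R} :
    M.IsUpperTriangular ↔ M 1 0 = 0 := by
  refine ⟨fun h ↦ h Fin.zero_lt_one, fun h i j hji ↦ ?_⟩
  fin_cases i <;> fin_cases j <;> simp_all

namespace GeneralLinearGroup

variable [Fintype n] [DecidableEq n]

variable (n R) in
def upperTriangular : Subgroup (GL n R) where
  carrier := {g | (g : Matrix n n R).IsUpperTriangular}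
  one_mem' := blockTriangular_one
  mul_mem' := BlockTriangular.mul
  inv_mem' {g} hg := by
    let := g.invertible
    simpa only [Set.mem_ofPred_eq, coe_units_inv] using blockTriangular_inv_of_blockTriangular hg

lemma mem_upperTriangular {g : GL n R} :
    g ∈ upperTriangular n R ↔ (g : Matrix n n R).IsUpperTriangular :=
  Iff.rfl

variable (n R) in
def upperTriangularDiag : upperTriangular n R →* (n → R) where
  toFun g := ((g : GL n R) : Matrix n n R).diag
  map_one' := by ext; simp
  map_mul' g h := funext (IsUpperTriangular.mul_apply_self g.2 h.2)

variable (n R) in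
def unitriangular : Subgroup (GL n R) where
  carrier := {g | (g : Matrix n n R).IsUpperTriangular ∧ ∀ i, g i i = 1}
  one_mem' := ⟨blockTriangular_one, by simp⟩
  mul_mem' {g h} hg hh :=
    ⟨hg.1.mul hh.1, fun i ↦ by simp [IsUpperTriangular.mul_apply_self hg.1 hh.1, hg.2, hh.2]⟩
  inv_mem' {g} hg := by
    have hinv : g⁻¹ ∈ upperTriangular n R := (upperTriangular n R).inv_mem hg.1
    refine ⟨hinv, fun i ↦ ?_⟩
    have := IsUpperTriangular.mul_apply_self hinv hg.1 i
    rwa [← Units.val_mul, inv_mul_cancel, Units.val_one, one_apply_eq, hg.2, mul_one, eq_comm]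
      at this

lemma commutatorElement_mem_unitriangular {g h : GL n R} (hg : g ∈ upperTriangular n R)
    (hh : h ∈ upperTriangular n R) : ⁅g, h⁆ ∈ unitriangular n R := by
  set g' : upperTriangular n R := ⟨g, hg⟩
  set h' : upperTriangular n R := ⟨h, hh⟩
  exact ⟨⁅g', h'⁆.2, congr_fun ((upperTriangularDiag n R).map_commutatorElement_eq_one g' h')⟩

lemma unitriangular_fin_two_mul_comm {g h : GL (Fin 2) R} (hg : g ∈ unitriangular (Fin 2) R)
    (hh : h ∈ unitriangular (Fin 2) R) : g * h = h * g := by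
  obtain ⟨hg10, hg⟩ := hg
  obtain ⟨hh10, hh⟩ := hh
  rw [isUpperTriangular_fin_two_iff] at hg10 hh10
  ext i j
  fin_cases i <;> fin_cases j <;>
    simp [mul_apply, Fin.sum_univ_two, hg10, hh10, hg, hh, add_comm]

end GeneralLinearGroup

end Matrix

open Matrix.GeneralLinearGroup in
theorem stmt_1_general
    (S : Type) [CommRing S]
    (ξS : S)
    (R : Type) [CommRing R] (π : S →+* R)
    (A B : Matrix.GeneralLinearGroup (Fin 2) R)
    (hA : (A : Matrix (Fin 2) (Fin 2) R) = !![π ξS, 0; 0, 1])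
    (hB : (B : Matrix (Fin 2) (Fin 2) R) = !![1, 1; 0, 1]) :
    ∀ x ∈ ⁅Subgroup.closure {A, B}, Subgroup.closure {A, B}⁆,
      ∀ y ∈ ⁅Subgroup.closure {A, B}, Subgroup.closure {A, B}⁆, x * y = y * x := by
  have hQ : Subgroup.closure {A, B} ≤ upperTriangular (Fin 2) R := by
    rw [Subgroup.closure_le]
    rintro _ (rfl | rfl) <;>
      simp [mem_upperTriangular, isUpperTriangular_fin_two_iff, hA, hB]
  have hQ' : ⁅Subgroup.closure {A, B}, Subgroup.closure {A, B}⁆ ≤ unitriangular (Fin 2) R :=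
    Subgroup.commutator_le.mpr fun g hg h hh ↦ commutatorElement_mem_unitriangular (hQ hg) (hQ hh)
  intro x hx y hy
  exact unitriangular_fin_two_mul_comm (hQ' hx) (hQ' hy)

/-- Here `S` plays the role of the cyclotomic ring `ℤ[ξ] ⊆ ℂ` (a subring of `ℂ` generated by a
primitive `n`-th root of unity `ξ`), and `R = ℤ[ξ]/(n)` is presented as a quotient of `S` by the
ideal generated by `n`. -/
theorem stmt_1 (n : ℕ) (hn : 2 < n) (ξ : ℂ) (hξ : IsPrimitiveRoot ξ n)
    (S : Type) [CommRing S] (ι : S →+* ℂ) (hι : Function.Injective ι)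
    (ξS : S) (hξS : ι ξS = ξ) (hgen : Algebra.adjoin ℤ ({ξS} : Set S) = ⊤)
    (R : Type) [CommRing R] (π : S →+* R) (hπ : Function.Surjective π)
    (hker : RingHom.ker π = Ideal.span {(n : S)})
    (A B : Matrix.GeneralLinearGroup (Fin 2) R)
    (hA : (A : Matrix (Fin 2) (Fin 2) R) = !![π ξS, 0; 0, 1])
    (hB : (B : Matrix (Fin 2) (Fin 2) R) = !![1, 1; 0, 1]) :
    ∀ x ∈ ⁅Subgroup.closure {A, B}, Subgroup.closure {A, B}⁆,
      ∀ y ∈ ⁅Subgroup.closure {A, B}, Subgroup.closure {A, B}⁆, x * y = y * x :=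
  stmt_1_general S ξS R π A B hA hB
end

section
/- Let n > 2, ξ a primitive n-th root of unity, R = ℤ[ξ]/(n), and let C = [[ξ^k, z],[0,1]] ∈ GL₂(R) with k ∈ ℤ, z ∈ R. Then C^n = Id. In particular, the subgroup of GL₂(R) generated by [[ξ,0],[0,1]] and [[1,1],[0,1]] is n-periodic. -/
open Finset in
lemma upper_pow_aux {R : Type*} [CommRing R] (a z : R) (m : ℕ) :
    (!![a, z; 0, 1] : Matrix (Fin 2) (Fin 2) R) ^ m
      = !![a ^ m, (∑ i ∈ range m, a ^ i) * z; 0, 1] := by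
  induction m with
  | zero => simp [Matrix.one_fin_two]
  | succ m ih =>
      rw [pow_succ, ih, Matrix.mul_fin_two, geom_sum_succ']
      ext i j
      fin_cases i <;> fin_cases j <;> simp <;> ring


/-- Here `S` plays the role of the cyclotomic ring `ℤ[ξ] ⊆ ℂ` (a subring of `ℂ` generated by a
primitive `n`-th root of unity `ξ`), and `R = ℤ[ξ]/(n)` is presented as a quotient of `S` by the
ideal generated by `n`. -/
theorem stmt_2 (n : ℕ) (hn : 2 < n) (ξ : ℂ) (hξ : IsPrimitiveRoot ξ n)
    (S : Type) [CommRing S] (ι : S →+* ℂ) (hι : Function.Injective ι)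
    (ξS : S) (hξS : ι ξS = ξ) (hgen : Algebra.adjoin ℤ ({ξS} : Set S) = ⊤)
    (R : Type) [CommRing R] (π : S →+* R) (hπ : Function.Surjective π)
    (hker : RingHom.ker π = Ideal.span {(n : S)})
    (A B : Matrix.GeneralLinearGroup (Fin 2) R)
    (hA : (A : Matrix (Fin 2) (Fin 2) R) = !![π ξS, 0; 0, 1])
    (hB : (B : Matrix (Fin 2) (Fin 2) R) = !![1, 1; 0, 1]) :
    (∀ u : Rˣ, (u : R) = π ξS → ∀ (k : ℤ) (z : R),
      (!![((u ^ k : Rˣ) : R), z; 0, 1] : Matrix (Fin 2) (Fin 2) R) ^ n = 1) ∧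
    ∀ C ∈ Subgroup.closure {A, B}, C ^ n = 1 := by
  have hn0 : 0 < n := by omega
  have hξSn : ξS ^ n = 1 := by
    apply hι; rw [map_pow, hξS, hξ.pow_eq_one, map_one]
  have hπn : π (n : S) = 0 := by
    rw [← RingHom.mem_ker, hker]; exact Ideal.mem_span_singleton_self _
  have hπξn : (π ξS) ^ n = 1 := by rw [← map_pow, hξSn, map_one]
  have hsum : ∀ j : ℕ, (∑ i ∈ Finset.range n, ((π ξS) ^ j) ^ i) = 0 := by
    intro j
    have h1 : (∑ i ∈ Finset.range n, ((π ξS) ^ j) ^ i)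
        = π (∑ i ∈ Finset.range n, (ξS ^ j) ^ i) := by
      rw [map_sum]; simp [map_pow]
    rw [h1]
    by_cases h : n ∣ j
    · obtain ⟨c, rfl⟩ := h
      have : ξS ^ (n * c) = 1 := by rw [pow_mul, hξSn, one_pow]
      rw [this]
      have h2 : (∑ i ∈ Finset.range n, (1 : S) ^ i) = (n : S) := by simp
      rw [h2, hπn]
    · have hx : (ξ ^ j : ℂ) ≠ 1 := fun h1 => h ((hξ.pow_eq_one_iff_dvd j).mp h1)
      have hS : (∑ i ∈ Finset.range n, (ξS ^ j) ^ i) = 0 := by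
        apply hι
        rw [map_sum, map_zero]
        have : ∀ i, ι ((ξS ^ j) ^ i) = (ξ ^ j) ^ i := by
          intro i; rw [map_pow, map_pow, hξS]
        simp_rw [this]
        rw [geom_sum_eq hx]
        rw [← pow_mul, mul_comm j n, pow_mul, hξ.pow_eq_one, one_pow, sub_self, zero_div]
      rw [hS, map_zero]
  have part1 : ∀ u : Rˣ, (u : R) = π ξS → ∀ (k : ℤ) (z : R),
      (!![((u ^ k : Rˣ) : R), z; 0, 1] : Matrix (Fin 2) (Fin 2) R) ^ n = 1 := by
    intro u hu k z
    have hun : u ^ n = 1 := by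
      apply Units.ext; rw [Units.val_pow_eq_pow_val, hu, hπξn, Units.val_one]
    have hmod : (((k % (n : ℤ)).toNat : ℤ)) = k % (n : ℤ) :=
      Int.toNat_of_nonneg (Int.emod_nonneg k (by exact_mod_cast hn0.ne'))
    have hk : u ^ k = u ^ ((k % (n : ℤ)).toNat) := by
      conv_lhs => rw [← Int.emod_add_mul_ediv k (n : ℤ)]
      rw [zpow_add, zpow_mul, zpow_natCast, hun, one_zpow, mul_one]
      conv_lhs => rw [← hmod]
      rw [zpow_natCast]
    set r := (k % (n : ℤ)).toNat
    have hval : ((u ^ k : Rˣ) : R) = (π ξS) ^ r := by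
      rw [hk, Units.val_pow_eq_pow_val, hu]
    rw [hval, upper_pow_aux, hsum r, zero_mul, ← pow_mul, mul_comm r n, pow_mul, hπξn,
      one_pow, Matrix.one_fin_two]
  refine ⟨part1, ?_⟩
  -- build the unit u
  have hinv : π ξS * (π ξS) ^ (n - 1) = 1 := by
    rw [← pow_succ', Nat.sub_add_cancel hn0]; exact hπξn
  set u : Rˣ := ⟨π ξS, (π ξS) ^ (n - 1), hinv, by rw [mul_comm]; exact hinv⟩ with hu_def
  have hu : (u : R) = π ξS := rfl
  set H : Subgroup (Matrix.GeneralLinearGroup (Fin 2) R) :=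
    { carrier := {C | ∃ (k : ℤ) (z : R),
        (C : Matrix (Fin 2) (Fin 2) R) = !![((u ^ k : Rˣ) : R), z; 0, 1]}
      one_mem' := ⟨0, 0, by simp [Matrix.one_fin_two]⟩
      mul_mem' := by
        rintro C D ⟨k1, z1, h1⟩ ⟨k2, z2, h2⟩
        refine ⟨k1 + k2, ((u ^ k1 : Rˣ) : R) * z2 + z1, ?_⟩
        show ((C : Matrix (Fin 2) (Fin 2) R) * D) = _
        rw [h1, h2, Matrix.mul_fin_two, zpow_add, Units.val_mul]
        ext i j
        fin_cases i <;> fin_cases j <;> simp <;> ring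
      inv_mem' := by
        rintro C ⟨k, z, h⟩
        refine ⟨-k, -(((u ^ (-k) : Rˣ) : R)) * z, ?_⟩
        set D : Matrix (Fin 2) (Fin 2) R :=
          !![((u ^ (-k) : Rˣ) : R), -(((u ^ (-k) : Rˣ) : R)) * z; 0, 1] with hD
        have hCD : (C : Matrix (Fin 2) (Fin 2) R) * D = 1 := by
          rw [h, hD, Matrix.mul_fin_two]
          have : ((u ^ k : Rˣ) : R) * ((u ^ (-k) : Rˣ) : R) = 1 := by
            rw [← Units.val_mul, ← zpow_add, add_neg_cancel, zpow_zero, Units.val_one]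
          ext i j
          fin_cases i <;> fin_cases j <;>
            simp [Matrix.one_fin_two] <;>
            first
            | exact this
            | (rw [← mul_assoc, ← neg_mul, mul_comm ((u ^ k : Rˣ) : R), neg_mul, this]; ring)
        calc ((C⁻¹ : Matrix.GeneralLinearGroup (Fin 2) R) : Matrix (Fin 2) (Fin 2) R)
            = ((C⁻¹ : Matrix.GeneralLinearGroup (Fin 2) R) : Matrix (Fin 2) (Fin 2) R)
              * ((C : Matrix (Fin 2) (Fin 2) R) * D) := by rw [hCD, mul_one]
          _ = (((C⁻¹ * C : Matrix.GeneralLinearGroup (Fin 2) R) : Matrix (Fin 2) (Fin 2) R)) * D := by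
              rw [Units.val_mul, mul_assoc]
          _ = D := by rw [inv_mul_cancel, Units.val_one, one_mul] }
    with hH_def
  have hle : Subgroup.closure {A, B} ≤ H := by
    rw [Subgroup.closure_le]
    rintro X (rfl | rfl)
    · exact ⟨1, 0, by rw [hA, zpow_one, hu]⟩
    · exact ⟨0, 1, by rw [hB, zpow_zero, Units.val_one]⟩
  intro C hC
  obtain ⟨k, z, h⟩ := hle hC
  apply Units.ext
  rw [Units.val_pow_eq_pow_val, h, part1 u hu k z, Units.val_one]
end

section
/- Let n > 2, ξ a primitive n-th root of unity, and R = ℤ[ξ]/(n). If k ∈ ℤ satisfies k·(ξ − 1) = 0 in R, then n divides k. Consequently, the element [[1, ξ−1],[0,1]] of GL₂(R) has order exactly n. -/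
set_option maxHeartbeats 800000
set_option synthInstance.maxHeartbeats 200000


/-- Here `S` plays the role of the cyclotomic ring `ℤ[ξ] ⊆ ℂ` (a subring of `ℂ` generated by a
primitive `n`-th root of unity `ξ`), and `R = ℤ[ξ]/(n)` is presented as a quotient of `S` by the
ideal generated by `n`. -/
theorem stmt_4 (n : ℕ) (hn : 2 < n) (ξ : ℂ) (hξ : IsPrimitiveRoot ξ n)
    (S : Type) [CommRing S] (ι : S →+* ℂ) (hι : Function.Injective ι)
    (ξS : S) (hξS : ι ξS = ξ) (hgen : Algebra.adjoin ℤ ({ξS} : Set S) = ⊤)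
    (R : Type) [CommRing R] (π : S →+* R) (hπ : Function.Surjective π)
    (hker : RingHom.ker π = Ideal.span {(n : S)}) :
    (∀ k : ℤ, (k : R) * (π ξS - 1) = 0 → (n : ℤ) ∣ k) ∧
    orderOf (!![1, π ξS - 1; 0, 1] : Matrix (Fin 2) (Fin 2) R) = n := by
  have hnpos : 0 < n := by omega
  -- ξ is integral over ℤ
  have hint : IsIntegral ℤ ξ := hξ.isIntegral hnpos
  have hmin : Polynomial.cyclotomic n ℤ = minpoly ℤ ξ :=
    Polynomial.cyclotomic_eq_minpoly hξ hnpos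
  -- the power basis of ℤ[ξ] ⊆ ℂ
  have hdim2 : 2 ≤ (Algebra.adjoin.powerBasis' hint).dim := by
    rw [Algebra.adjoin.powerBasis'_dim, ← hmin, Polynomial.natDegree_cyclotomic]
    have he : Even n.totient := Nat.totient_even hn
    have hpos : 0 < n.totient := Nat.totient_pos.2 hnpos
    rcases he with ⟨r, hr⟩
    omega
  set B := Algebra.adjoin.powerBasis' hint with hB
  set i0 : Fin B.dim := ⟨0, by omega⟩ with hi0
  set i1 : Fin B.dim := ⟨1, by omega⟩ with hi1
  have h01 : i0 ≠ i1 := by simp [hi0, hi1, Fin.ext_iff]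
  -- Part 1
  have part1 : ∀ k : ℤ, (k : R) * (π ξS - 1) = 0 → (n : ℤ) ∣ k := by
    intro k hk
    have hmem : (k : S) * (ξS - 1) ∈ RingHom.ker π := by
      rw [RingHom.mem_ker, map_mul, map_sub, map_intCast, map_one]
      exact hk
    rw [hker, Ideal.mem_span_singleton] at hmem
    obtain ⟨u, hu⟩ := hmem
    have hC : (k : ℂ) * (ξ - 1) = (n : ℂ) * ι u := by
      have := congrArg ι hu
      simpa [hξS] using this
    have huA : ι u ∈ Algebra.adjoin ℤ ({ξ} : Set ℂ) := by
      have hmem : ι u ∈ (Algebra.adjoin ℤ ({ξS} : Set S)).map ι.toIntAlgHom := by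
        rw [hgen]
        exact ⟨u, Algebra.mem_top, rfl⟩
      have heq : (Algebra.adjoin ℤ ({ξS} : Set S)).map ι.toIntAlgHom =
          Algebra.adjoin ℤ ({ξ} : Set ℂ) := by
        rw [AlgHom.map_adjoin, Set.image_singleton]
        congr 1
        simp [hξS, RingHom.toIntAlgHom]
      rwa [heq] at hmem
    set u' : Algebra.adjoin ℤ ({ξ} : Set ℂ) := ⟨ι u, huA⟩ with hu'
    have hξA : ξ ∈ Algebra.adjoin ℤ ({ξ} : Set ℂ) :=
      Algebra.subset_adjoin (Set.mem_singleton ξ)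
    have hEqA : (k : Algebra.adjoin ℤ ({ξ} : Set ℂ)) * (⟨ξ, hξA⟩ - 1) = (n : _) * u' := by
      apply Subtype.ext
      push_cast
      exact hC
    have hgen' : B.gen = ⟨ξ, hξA⟩ := by
      rw [hB, Algebra.adjoin.powerBasis'_gen]
    have hb1 : B.basis i1 = ⟨ξ, hξA⟩ := by
      rw [B.basis_eq_pow, hgen', hi1]; simp
    have hb0 : B.basis i0 = 1 := by
      rw [B.basis_eq_pow, hi0]; simp
    have hEqA' : k • B.basis i1 - k • B.basis i0 = (n : ℤ) • u' := by
      rw [hb1, hb0, zsmul_eq_mul, zsmul_eq_mul, zsmul_eq_mul, ← mul_sub, hEqA]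
      push_cast
      ring
    have h2 : B.basis.repr (k • B.basis i1 - k • B.basis i0) i1
        = B.basis.repr ((n : ℤ) • u') i1 := by rw [hEqA']
    simp only [map_sub, map_smul, Module.Basis.repr_self] at h2
    simp only [Finsupp.sub_apply, Finsupp.smul_apply, Finsupp.single_apply,
      if_pos rfl, if_neg h01, if_true, smul_eq_mul, mul_one, mul_zero, sub_zero] at h2
    exact ⟨B.basis.repr u' i1, h2⟩
  refine ⟨part1, ?_⟩
  -- Part 2
  set x : R := π ξS - 1 with hx
  have hnR : (n : R) = 0 := by
    have : (n : S) ∈ RingHom.ker π := by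
      rw [hker]; exact Ideal.mem_span_singleton_self _
    rw [RingHom.mem_ker] at this
    rw [← map_natCast π]
    exact this
  have hpow : ∀ m : ℕ, (!![1, x; 0, 1] : Matrix (Fin 2) (Fin 2) R) ^ m
      = !![1, (m : R) * x; 0, 1] := by
    intro m
    induction m with
    | zero => simp [Matrix.one_fin_two]
    | succ m ih =>
      rw [pow_succ, ih, Matrix.mul_fin_two]
      push_cast
      congr 1 <;> ring_nf
  have hentry : ∀ c : R, (!![1, c; 0, 1] : Matrix (Fin 2) (Fin 2) R) = 1 ↔ c = 0 := by
    intro c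
    constructor
    · intro h
      have := congrArg (fun M => M 0 1) h
      simpa [Matrix.one_fin_two] using this
    · rintro rfl
      simp [Matrix.one_fin_two]
  rw [orderOf_eq_iff hnpos]
  constructor
  · rw [hpow, hentry, hnR, zero_mul]
  · intro m hmn hmpos h
    rw [hpow, hentry] at h
    have : (n : ℤ) ∣ (m : ℤ) := by
      apply part1
      exact_mod_cast h
    have := Int.le_of_dvd (by exact_mod_cast hmpos) this
    omega
end
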